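/- Suppose the box I'×J' (1-δ)-covers a path τ, meaning the initial (resp. final) vertex of the subpath τ_{I'} is within δ·μ(I') vertical units of (min I', min J') (resp. (max I', max J')). Then the normalized cost of the box satisfies ncost(I'×J') ≤ ncost(τ_{I'}) + 2δ, where ncost(I'×J') is the minimum cost of a corner-to-corner path in the induced grid graph divided by μ(I'). -/

import Mathlib

open List

/-- Costs of the edit operations (removed from Mathlib; restored with its old meaning). -/
structure Levenshtein.Cost (α β δ : Type*) where
  delete : α → δ
  insert : β → δ
  substitute : α → β → δ

/-- The default unit cost (as in the old Mathlib). -/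
def Levenshtein.defaultCost {α : Type*} [DecidableEq α] : Levenshtein.Cost α α ℕ where
  delete _ := 1
  insert _ := 1
  substitute a b := if a = b then 0 else 1

/-- Levenshtein distance with cost `C`, by the recursion characterizing the old Mathlib
definition (`levenshtein_nil_nil`, `levenshtein_nil_cons`, `levenshtein_cons_nil`,
`levenshtein_cons_cons`). -/
def levenshtein {α β δ : Type*} [AddZeroClass δ] [Min δ] (C : Levenshtein.Cost α β δ) :
    List α → List β → δ
  | [], [] => 0
  | [], y :: ys => C.insert y + levenshtein C [] ys
  | x :: xs, [] => C.delete x + levenshtein C xs []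
  | x :: xs, y :: ys =>
    min (C.delete x + levenshtein C xs (y :: ys))
      (min (C.insert y + levenshtein C (x :: xs) ys) (C.substitute x y + levenshtein C xs ys))
termination_by xs ys => xs.length + ys.length

/-- Edit distance between two lists (Levenshtein distance with unit costs). -/
def edist {α : Type*} [DecidableEq α] (x y : List α) : ℕ :=
  levenshtein Levenshtein.defaultCost x y

/-- The substring of `x` indexed by the interval `I = {I.1, ..., I.2}` minus its minimum,
i.e. the characters `x_{I.1+1}, ..., x_{I.2}` (1-indexed). -/
def sub {α : Type*} (x : List α) (I : ℕ × ℕ) : List α :=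
  (x.drop I.1).take (I.2 - I.1)

/-- A single step in a grid graph: horizontal, vertical, or diagonal. -/
def IsStep (p q : ℕ × ℕ) : Prop :=
  q = (p.1 + 1, p.2) ∨ q = (p.1, p.2 + 1) ∨ q = (p.1 + 1, p.2 + 1)

/-- Cost of a step in the grid graph `G_{x,y}`: H- and V-steps cost 1, a D-step from `p`
costs 0 iff `x_{p.1+1} = y_{p.2+1}`. -/
def stepCost {α : Type*} [DecidableEq α] (x y : List α) (p q : ℕ × ℕ) : ℕ :=
  if q = (p.1 + 1, p.2 + 1) then (if x[p.1]? = y[p.2]? then 0 else 1) else 1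

/-- Cost of a path (list of vertices) in `G_{x,y}`. -/
def pathCost {α : Type*} [DecidableEq α] (x y : List α) (τ : List (ℕ × ℕ)) : ℕ :=
  ((τ.zip τ.tail).map (fun e => stepCost x y e.1 e.2)).sum

def IsPath (τ : List (ℕ × ℕ)) : Prop := τ.Chain' IsStep

def IsPathFrom (τ : List (ℕ × ℕ)) (a b : ℕ × ℕ) : Prop :=
  IsPath τ ∧ τ.head? = some a ∧ τ.getLast? = some b

/-- Minimum cost of a corner-to-corner path in the box `I × J` of `G_{x,y}`. -/
noncomputable def boxCost {α : Type*} [DecidableEq α] (x y : List α) (I J : ℕ × ℕ) : ℕ :=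
  sInf {c | ∃ τ, IsPathFrom τ (I.1, J.1) (I.2, J.2) ∧ pathCost x y τ = c}

/-- A path crosses the box `I × J`: all its vertices lie in the box and its horizontal
projection is exactly `I`. -/
def Crosses (τ : List (ℕ × ℕ)) (I J : ℕ × ℕ) : Prop :=
  IsPath τ ∧ τ ≠ [] ∧
  (∀ v ∈ τ, I.1 ≤ v.1 ∧ v.1 ≤ I.2 ∧ J.1 ≤ v.2 ∧ v.2 ≤ J.2) ∧
  τ.head?.map Prod.fst = some I.1 ∧ τ.getLast?.map Prod.fst = some I.2

/-- `σ` is the minimal subpath `τ_I` of `τ` whose horizontal projection is `I`. -/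
def IsCrossSubpath (τ σ : List (ℕ × ℕ)) (I : ℕ × ℕ) : Prop :=
  σ <:+: τ ∧ σ ≠ [] ∧
  (∀ v ∈ σ, I.1 ≤ v.1 ∧ v.1 ≤ I.2) ∧
  σ.head?.map Prod.fst = some I.1 ∧ σ.getLast?.map Prod.fst = some I.2 ∧
  (∀ v ∈ σ.tail, v.1 ≠ I.1) ∧ (∀ v ∈ σ.dropLast, v.1 ≠ I.2)

/-- The box `I × J` `(1-δ)`-covers a path whose relevant subpath is `σ`: the start (end)
vertex of `σ` is within `δ·μ(I)` vertical units of the lower-left (upper-right) corner. -/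
def CoversAt (δ : ℚ) (I J : ℕ × ℕ) (σ : List (ℕ × ℕ)) : Prop :=
  ∃ s e : ℕ × ℕ, σ.head? = some s ∧ σ.getLast? = some e ∧
    |(s.2 : ℚ) - (J.1 : ℚ)| ≤ δ * ((I.2 : ℚ) - (I.1 : ℚ)) ∧
    |(e.2 : ℚ) - (J.2 : ℚ)| ≤ δ * ((I.2 : ℚ) - (I.1 : ℚ))

/-!
Clamp the vertical coordinate of every vertex of `τ_{I'}` into `J'`. Clamping turns each step
into a step or a stay and never increases "cost plus vertical progress", so the clamped path
costs at most `cost(τ_{I'})` plus the vertical distances its endpoints were moved. Joining the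
corners of the box to the clamped endpoints by vertical segments costs the remaining distances,
so with `s`, `e` the endpoints of `τ_{I'}`,
`cost(I' × J') ≤ cost(τ_{I'}) + |s.2 - min J'| + |e.2 - max J'| ≤ cost(τ_{I'}) + 2δ·μ(I')`.
-/

lemma isPathFrom_singleton (v : ℕ × ℕ) : IsPathFrom [v] v v :=
  ⟨isChain_singleton v, rfl, rfl⟩

lemma IsPathFrom.cons {τ : List (ℕ × ℕ)} {a b v : ℕ × ℕ} (h : IsPathFrom τ a b)
    (hv : IsStep v a) : IsPathFrom (v :: τ) v b := by
  obtain ⟨hc, hh, hl⟩ := h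
  cases τ with
  | nil => simp at hh
  | cons w ts =>
    obtain rfl : w = a := by simpa using hh
    exact ⟨isChain_cons_cons.mpr ⟨hv, hc⟩, rfl, by rwa [getLast?_cons_cons]⟩

lemma isPathFrom_pair {v w : ℕ × ℕ} (h : IsStep v w) : IsPathFrom [v, w] v w :=
  (isPathFrom_singleton w).cons h

section GridPath

variable {α : Type*} [DecidableEq α] (x y : List α)

lemma pathCost_singleton (v : ℕ × ℕ) : pathCost x y [v] = 0 := rfl

lemma pathCost_pair (v w : ℕ × ℕ) : pathCost x y [v, w] = stepCost x y v w := rfl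

lemma pathCost_cons_cons (p q : ℕ × ℕ) (l : List (ℕ × ℕ)) :
    pathCost x y (p :: q :: l) = stepCost x y p q + pathCost x y (q :: l) := rfl

lemma pathCost_cons {τ : List (ℕ × ℕ)} {a : ℕ × ℕ} (h : τ.head? = some a) (v : ℕ × ℕ) :
    pathCost x y (v :: τ) = stepCost x y v a + pathCost x y τ := by
  cases τ with
  | nil => simp at h
  | cons w ts =>
    obtain rfl : w = a := by simpa using h
    rfl

lemma stepCost_eq_one {p q : ℕ × ℕ} (h : q ≠ (p.1 + 1, p.2 + 1)) : stepCost x y p q = 1 := by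
  simp [stepCost, h]

lemma IsPathFrom.append {τ₁ τ₂ : List (ℕ × ℕ)} {a b c : ℕ × ℕ} (h₁ : IsPathFrom τ₁ a b)
    (h₂ : IsPathFrom τ₂ b c) :
    ∃ ρ, IsPathFrom ρ a c ∧ pathCost x y ρ = pathCost x y τ₁ + pathCost x y τ₂ := by
  induction τ₁ generalizing a with
  | nil => simp [IsPathFrom] at h₁
  | cons v rest ih =>
    obtain ⟨hc, hh, hl⟩ := h₁
    obtain rfl : v = a := by simpa using hh
    cases rest with
    | nil =>
      obtain rfl : v = b := by simpa using hl
      exact ⟨τ₂, h₂, by simp [pathCost_singleton]⟩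
    | cons w rest =>
      obtain ⟨hvw, hc'⟩ := isChain_cons_cons.mp hc
      obtain ⟨ρ, hρ, hcost⟩ := ih ⟨hc', rfl, by rwa [getLast?_cons_cons] at hl⟩
      refine ⟨v :: ρ, hρ.cons hvw, ?_⟩
      rw [pathCost_cons x y hρ.2.1, hcost, pathCost_cons_cons, add_assoc]

lemma exists_isPathFrom_vertical (a : ℕ) {b c : ℕ} (hbc : b ≤ c) :
    ∃ τ, IsPathFrom τ (a, b) (a, c) ∧ pathCost x y τ = c - b := by
  induction c, hbc using Nat.le_induction with
  | base => exact ⟨[(a, b)], isPathFrom_singleton _, by simp [pathCost_singleton]⟩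
  | succ c hbc ih =>
    obtain ⟨τ, hτ, hcost⟩ := ih
    obtain ⟨ρ, hρ, hρcost⟩ :=
      hτ.append x y (isPathFrom_pair (show IsStep (a, c) (a, c + 1) from Or.inr (Or.inl rfl)))
    refine ⟨ρ, hρ, ?_⟩
    rw [hρcost, hcost, pathCost_pair, stepCost_eq_one x y (by simp)]
    omega

lemma IsPathFrom.exists_map (f : ℕ × ℕ → ℕ × ℕ) (Φ : ℕ × ℕ → ℤ)
    (hf : ∀ v w, IsStep v w →
      ∃ ρ, IsPathFrom ρ (f v) (f w) ∧ pathCost x y ρ + Φ w ≤ stepCost x y v w + Φ v)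
    {σ : List (ℕ × ℕ)} {s e : ℕ × ℕ} (hσ : IsPathFrom σ s e) :
    ∃ ρ, IsPathFrom ρ (f s) (f e) ∧ pathCost x y ρ + Φ e ≤ pathCost x y σ + Φ s := by
  induction σ generalizing s with
  | nil => simp [IsPathFrom] at hσ
  | cons v rest ih =>
    obtain ⟨hc, hh, hl⟩ := hσ
    obtain rfl : v = s := by simpa using hh
    cases rest with
    | nil =>
      obtain rfl : v = e := by simpa using hl
      exact ⟨[f v], isPathFrom_singleton _, by simp [pathCost_singleton]⟩
    | cons w rest =>
      obtain ⟨hvw, hc'⟩ := isChain_cons_cons.mp hc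
      obtain ⟨ρ₂, hρ₂, hcost₂⟩ := ih ⟨hc', rfl, by rwa [getLast?_cons_cons] at hl⟩
      obtain ⟨ρ₁, hρ₁, hcost₁⟩ := hf v w hvw
      obtain ⟨ρ, hρ, hcost⟩ := hρ₁.append x y hρ₂
      refine ⟨ρ, hρ, ?_⟩
      rw [hcost, pathCost_cons_cons]
      push_cast
      omega

lemma boxCost_le_pathCost {I J : ℕ × ℕ} {τ : List (ℕ × ℕ)}
    (hτ : IsPathFrom τ (I.1, J.1) (I.2, J.2)) : boxCost x y I J ≤ pathCost x y τ :=
  Nat.sInf_le ⟨τ, hτ, rfl⟩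

end GridPath

section Clamp

def clampSnd (J : ℕ × ℕ) (v : ℕ × ℕ) : ℕ × ℕ := (v.1, min (max v.2 J.1) J.2)

variable {α : Type*} [DecidableEq α] (x y : List α) {J : ℕ × ℕ}

lemma exists_isPathFrom_clampSnd_of_isStep (hJ : J.1 ≤ J.2) {v w : ℕ × ℕ} (h : IsStep v w) :
    ∃ ρ, IsPathFrom ρ (clampSnd J v) (clampSnd J w) ∧
      pathCost x y ρ + ((clampSnd J w).2 - w.2 : ℤ) ≤
        stepCost x y v w + ((clampSnd J v).2 - v.2 : ℤ) := by
  by_cases hstay : clampSnd J v = clampSnd J w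
  · refine ⟨[clampSnd J v], hstay ▸ isPathFrom_singleton _, ?_⟩
    rcases h with rfl | rfl | rfl <;>
      simp only [pathCost_singleton, clampSnd, Prod.ext_iff] at hstay ⊢ <;> omega
  have hstep : IsStep (clampSnd J v) (clampSnd J w) := by
    rcases h with rfl | rfl | rfl <;>
      simp only [clampSnd, Prod.ext_iff, IsStep, true_and, and_true, true_or] at hstay ⊢ <;> omega
  refine ⟨[clampSnd J v, clampSnd J w], isPathFrom_pair hstep, ?_⟩
  rw [pathCost_pair]
  rcases h with rfl | rfl | rfl
  · rw [stepCost_eq_one x y (by simp [clampSnd]), stepCost_eq_one x y (by simp)]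
    simp [clampSnd]
  · rw [stepCost_eq_one x y (by simp [clampSnd]), stepCost_eq_one x y (by simp)]
    simp only [clampSnd, Prod.ext_iff, true_and] at hstay ⊢
    omega
  · by_cases hflat : min (max (v.2 + 1) J.1) J.2 = min (max v.2 J.1) J.2
    · rw [stepCost_eq_one x y (by simp [clampSnd, hflat])]
      simp only [clampSnd, hflat]
      omega
    · have hv : clampSnd J v = v := Prod.ext rfl (by simp only [clampSnd]; omega)
      have hw : clampSnd J (v.1 + 1, v.2 + 1) = (v.1 + 1, v.2 + 1) :=
        Prod.ext rfl (by simp only [clampSnd]; omega)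
      rw [hv, hw]
      omega

lemma boxCost_le_pathCost_add_abs {I : ℕ × ℕ} (hJ : J.1 ≤ J.2) {σ : List (ℕ × ℕ)}
    {s e : ℕ × ℕ} (hσ : IsPathFrom σ s e) (hs : s.1 = I.1) (he : e.1 = I.2) :
    (boxCost x y I J : ℤ) ≤ pathCost x y σ + |(s.2 : ℤ) - J.1| + |(e.2 : ℤ) - J.2| := by
  obtain ⟨ρ, hρ, hcost⟩ := hσ.exists_map x y (clampSnd J) (fun v ↦ (clampSnd J v).2 - v.2)
    fun _ _ ↦ exists_isPathFrom_clampSnd_of_isStep x y hJ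
  obtain ⟨ρs, hρs, hcosts⟩ := exists_isPathFrom_vertical x y I.1
    (show J.1 ≤ (clampSnd J s).2 by simp only [clampSnd]; omega)
  obtain ⟨ρe, hρe, hcoste⟩ := exists_isPathFrom_vertical x y I.2
    (show (clampSnd J e).2 ≤ J.2 by simp only [clampSnd]; omega)
  rw [show clampSnd J s = (I.1, (clampSnd J s).2) from Prod.ext hs rfl,
    show clampSnd J e = (I.2, (clampSnd J e).2) from Prod.ext he rfl] at hρ
  obtain ⟨ρ₁, hρ₁, hcost₁⟩ := hρs.append x y hρ
  obtain ⟨ρ₂, hρ₂, hcost₂⟩ := hρ₁.append x y hρe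
  have hbox := boxCost_le_pathCost x y hρ₂
  have := le_abs_self ((s.2 : ℤ) - J.1)
  have := neg_abs_le ((s.2 : ℤ) - J.1)
  have := le_abs_self ((e.2 : ℤ) - J.2)
  have := neg_abs_le ((e.2 : ℤ) - J.2)
  simp only [clampSnd] at hcost hcosts hcoste
  omega

end Clamp

theorem stmt5_general {α : Type*} [DecidableEq α] (x y : List α) (τ σ : List (ℕ × ℕ))
    (I' J' : ℕ × ℕ) (δ : ℚ)
    (hI : I'.1 < I'.2) (hJ : J'.1 ≤ J'.2)
    (hτ : IsPath τ) (hσ : IsCrossSubpath τ σ I')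
    (hcov : CoversAt δ I' J' σ) :
    (boxCost x y I' J' : ℚ) / ((I'.2 : ℚ) - (I'.1 : ℚ)) ≤
      (pathCost x y σ : ℚ) / ((I'.2 : ℚ) - (I'.1 : ℚ)) + 2 * δ := by
  obtain ⟨hinfix, -, -, hhead, hlast, -, -⟩ := hσ
  obtain ⟨s, e, hs, he, hcovs, hcove⟩ := hcov
  have hμ : (0 : ℚ) < (I'.2 : ℚ) - (I'.1 : ℚ) := by
    have : (I'.1 : ℚ) < I'.2 := by exact_mod_cast hI
    linarith
  have hbound : (boxCost x y I' J' : ℚ) ≤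
      pathCost x y σ + |(s.2 : ℚ) - J'.1| + |(e.2 : ℚ) - J'.2| := by
    exact_mod_cast boxCost_le_pathCost_add_abs x y hJ ⟨hτ.infix hinfix, hs, he⟩
      (by simpa [hs] using hhead) (by simpa [he] using hlast)
  rw [div_add' _ _ _ hμ.ne', div_le_div_iff_of_pos_right hμ]
  linarith

/-- if the box I'×J' (1-δ)-covers τ then
ncost(I'×J') ≤ ncost(τ_{I'}) + 2δ. -/
theorem stmt5 {α : Type*} [DecidableEq α] (x y : List α) (τ σ : List (ℕ × ℕ))
    (I' J' : ℕ × ℕ) (δ : ℚ) (hδ : 0 ≤ δ)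
    (hI : I'.1 < I'.2) (hJ : J'.1 ≤ J'.2)
    (hτ : IsPath τ) (hσ : IsCrossSubpath τ σ I')
    (hcov : CoversAt δ I' J' σ) :
    (boxCost x y I' J' : ℚ) / ((I'.2 : ℚ) - (I'.1 : ℚ)) ≤
      (pathCost x y σ : ℚ) / ((I'.2 : ℚ) - (I'.1 : ℚ)) + 2 * δ :=
  stmt5_general x y τ σ I' J' δ hI hJ hτ hσ hcov
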